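/- arXiv:1801.08686 — 3 statements merged into one kernel-verified Lean document; each statement's English description precedes it below -/
import Mathlib

section
/- Let G ≥ 1, q ∈ (0,1), and let p̃_1, …, p̃_G ∈ [0,1] be pairwise distinct p-values. Let Ĝ ⊆ {1,…,G} denote the Benjamini–Hochberg rejection set at level q (the set of indices of the K₀ smallest p-values, where K₀ = max{k : p̃_(k) ≤ k·q/G}, with K₀ = 0 and Ĝ = ∅ if this set is empty). Fix K₀ ≥ 1 and a subset 𝒢 ⊆ {1,…,G} with |𝒢| = K₀. Then Ĝ = 𝒢 if and only if both of the following hold: (a) p̃_g ≤ K₀·q/G for every g ∈ 𝒢, and (b) for every k ∈ {1,…,G−K₀}, the k-th smallest element of {p̃_{g′} : g′ ∉ 𝒢} is strictly greater than (K₀+k)·q/G. In particular, the event that a given gene g is rejected with rejection set of size K₀ factors as the intersection of a condition depending only on p̃_g (and the genes in 𝒢) and a condition depending only on the p-values of genes outside 𝒢. -/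
/-- The list of p-values of the genes in the index set `I`, sorted in increasing order. -/
noncomputable def sortedPvals (I : Finset ℕ) (p : ℕ → ℝ) : List ℝ :=
  (I.image p).sort (· ≤ ·)

/-- The `k`-th smallest p-value (for `k = 1, 2, …`) among the genes in `I`. -/
noncomputable def orderStat (I : Finset ℕ) (p : ℕ → ℝ) (k : ℕ) : ℝ :=
  (sortedPvals I p).getD (k - 1) 0

/-- The number `K₀` of Benjamini–Hochberg rejections at level `q` for the p-values
`p g`, `g ∈ {1,…,G}`: the largest `k` with `p_(k) ≤ k·q/G`, and `0` if there is no such `k`. -/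
noncomputable def bhCount (G : ℕ) (q : ℝ) (p : ℕ → ℝ) : ℕ :=
  if h : ((Finset.Icc 1 G).filter
      (fun k => orderStat (Finset.Icc 1 G) p k ≤ (k : ℝ) * q / G)).Nonempty
  then ((Finset.Icc 1 G).filter
      (fun k => orderStat (Finset.Icc 1 G) p k ≤ (k : ℝ) * q / G)).max' h
  else 0

/-- The Benjamini–Hochberg rejection set: the indices of the `bhCount` smallest p-values. -/
noncomputable def bhRejectionSet (G : ℕ) (q : ℝ) (p : ℕ → ℝ) : Finset ℕ :=
  (Finset.Icc 1 G).filter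
    (fun g => ((Finset.Icc 1 G).filter (fun g' => p g' ≤ p g)).card ≤ bhCount G q p)

/-!
With distinct p-values the rank `#{g' | p g' ≤ p g}` is a bijection from the genes onto
`{1,…,G}`, so the rejection set consists of the `K` genes of rank at most `K = bhCount`, and a set
`𝒢` of genes is of this form iff every p-value in `𝒢` lies below every p-value outside `𝒢`. For such
a separated `𝒢` of size `K₀` the sorted p-values are those of `𝒢` followed by those outside `𝒢`,
so `p_(K₀)` is the largest p-value in `𝒢` and `p_(K₀+k)` is the `k`-th smallest outside `𝒢`. Then
`K = K₀` says exactly (a) and (b). Conversely (a) and (b) already force the separation, since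
`p_g ≤ K₀q/G < (K₀+1)q/G <` the smallest p-value outside `𝒢`.
-/

open Finset

theorem Finset.sort_union_of_forall_lt {α : Type*} [LinearOrder α] {A B : Finset α}
    (h : ∀ a ∈ A, ∀ b ∈ B, a < b) : (A ∪ B).sort (· ≤ ·) = A.sort (· ≤ ·) ++ B.sort (· ≤ ·) := by
  have hAB : Disjoint A B := disjoint_left.2 fun a ha hb => (h a ha a hb).false
  refine List.Perm.eq_of_pairwise' (pairwise_sort _ _) ?_ ?_
  · refine List.pairwise_append.2 ⟨pairwise_sort _ _, pairwise_sort _ _, fun a ha b hb => ?_⟩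
    exact (h a ((mem_sort _).1 ha) b ((mem_sort _).1 hb)).le
  · rw [← Multiset.coe_eq_coe, ← Multiset.coe_add, sort_eq, sort_eq, sort_eq,
      ← disjUnion_eq_union _ _ hAB]
    rfl

section Rank

variable {ι β : Type*} [LinearOrder β] {s t : Finset ι} {f : ι → β}

def rankIn (s : Finset ι) (f : ι → β) (x : ι) : ℕ :=
  #{y ∈ s | f y ≤ f x}

theorem rankIn_mono {x y : ι} (h : f x ≤ f y) : rankIn s f x ≤ rankIn s f y :=
  card_le_card fun z hz => by
    rw [mem_filter] at hz ⊢
    exact ⟨hz.1, hz.2.trans h⟩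

theorem card_filter_rankIn_le [DecidableEq ι] (hf : Set.InjOn f s) (k : ℕ) :
    #{x ∈ s | rankIn s f x ≤ k} = min k #s := by
  induction s using induction_on_max_value f with
  | empty => simp
  | insert a s ha hmax ih =>
    have hf' : Set.InjOn f s := hf.mono (by simp)
    have hlt : ∀ x ∈ s, f x < f a := fun x hx =>
      (hmax x hx).lt_of_ne fun h => ha (hf (by simp [hx]) (by simp) h ▸ hx)
    have hrank : ∀ x ∈ s, rankIn (insert a s) f x = rankIn s f x := fun x hx => by
      rw [rankIn, filter_insert, if_neg (hlt x hx).not_ge]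
      rfl
    have hrank_a : rankIn (insert a s) f a = #s + 1 := by
      rw [rankIn, filter_true_of_mem fun x hx => ?_, card_insert_of_notMem ha]
      rcases mem_insert.1 hx with rfl | hx
      exacts [le_rfl, hmax x hx]
    rw [filter_insert, hrank_a, card_insert_of_notMem ha,
      filter_congr fun x hx => by rw [hrank x hx]]
    split_ifs with hk
    · rw [card_insert_of_notMem fun h => ha (mem_filter.1 h).1, ih hf']
      omega
    · rw [ih hf']
      omega

theorem lt_of_mem_filter_rankIn_le [DecidableEq ι] {k : ℕ} {x y : ι}
    (hx : x ∈ {z ∈ s | rankIn s f z ≤ k}) (hy : y ∈ s \ {z ∈ s | rankIn s f z ≤ k}) :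
    f x < f y := by
  simp only [mem_sdiff, mem_filter] at hx hy
  exact lt_of_not_ge fun h => hy.2 ⟨hy.1, (rankIn_mono h).trans hx.2⟩

theorem filter_rankIn_le_card_eq [DecidableEq ι] (hts : t ⊆ s) (hf : Set.InjOn f s)
    (hsep : ∀ x ∈ t, ∀ y ∈ s \ t, f x < f y) : {x ∈ s | rankIn s f x ≤ #t} = t := by
  have hsub : t ⊆ {x ∈ s | rankIn s f x ≤ #t} := fun x hx => by
    refine mem_filter.2 ⟨hts hx, card_le_card fun y hy => ?_⟩
    rw [mem_filter] at hy
    by_contra hyt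
    exact (hsep x hx y (mem_sdiff.2 ⟨hy.1, hyt⟩)).not_ge hy.2
  refine (eq_of_subset_of_card_le hsub ?_).symm
  rw [card_filter_rankIn_le hf, min_eq_left (card_le_card hts)]

end Rank

section OrderStat

variable {s t : Finset ℕ} {p : ℕ → ℝ}

theorem length_sortedPvals (hp : Set.InjOn p s) : (sortedPvals s p).length = #s := by
  rw [sortedPvals, length_sort, card_image_of_injOn hp]

theorem sortedPvals_eq_append_sdiff (hts : t ⊆ s) (hsep : ∀ x ∈ t, ∀ y ∈ s \ t, p x < p y) :
    sortedPvals s p = sortedPvals t p ++ sortedPvals (s \ t) p := by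
  rw [sortedPvals, ← union_sdiff_of_subset hts, image_union, union_sdiff_of_subset hts]
  exact sort_union_of_forall_lt (by simpa only [forall_mem_image] using hsep)

theorem orderStat_of_le_card (hts : t ⊆ s) (hsep : ∀ x ∈ t, ∀ y ∈ s \ t, p x < p y)
    (ht : Set.InjOn p t) {k : ℕ} (hk0 : 0 < k) (hk : k ≤ #t) :
    orderStat s p k = orderStat t p k := by
  rw [orderStat, orderStat, sortedPvals_eq_append_sdiff hts hsep,
    List.getD_append _ _ _ _ (by rw [length_sortedPvals ht]; omega)]

theorem orderStat_card_add (hts : t ⊆ s) (hsep : ∀ x ∈ t, ∀ y ∈ s \ t, p x < p y)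
    (ht : Set.InjOn p t) {k : ℕ} (hk : 0 < k) : orderStat s p (#t + k) = orderStat (s \ t) p k := by
  rw [orderStat, orderStat, sortedPvals_eq_append_sdiff hts hsep,
    List.getD_append_right _ _ _ _ (by rw [length_sortedPvals ht]; omega), length_sortedPvals ht]
  congr 1
  omega

theorem orderStat_card_eq_max' (hp : Set.InjOn p s) (hs : s.Nonempty) :
    orderStat s p #s = (s.image p).max' (hs.image p) := by
  have hlen := length_sortedPvals hp
  have hpos := hs.card_pos
  rw [max'_eq_sorted_last, orderStat, List.getD_eq_getElem _ _ (by omega)]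
  simp only [sortedPvals] at hlen ⊢
  simp only [hlen]

theorem orderStat_one_le {g : ℕ} (hg : g ∈ s) : orderStat s p 1 ≤ p g := calc
  orderStat s p 1 = (s.image p).min' (image_nonempty.2 ⟨g, hg⟩) := by
    rw [min'_eq_sorted_zero, orderStat, List.getD_eq_getElem]
    rfl
  _ ≤ p g := min'_le _ _ (mem_image_of_mem p hg)

end OrderStat

section BenjaminiHochberg

variable {G : ℕ} {q : ℝ} {p : ℕ → ℝ} {𝒢 : Finset ℕ}

noncomputable def bhCandidates (G : ℕ) (q : ℝ) (p : ℕ → ℝ) : Finset ℕ :=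
  {k ∈ Icc 1 G | orderStat (Icc 1 G) p k ≤ k * q / G}

theorem bhCount_eq_sup : bhCount G q p = (bhCandidates G q p).sup id := by
  rw [bhCount]
  split_ifs with h
  · rw [max'_eq_sup', sup'_eq_sup]
    rfl
  · rw [bhCandidates, not_nonempty_iff_eq_empty.1 h, sup_empty]
    rfl

theorem bhCount_le : bhCount G q p ≤ G := by
  rw [bhCount_eq_sup]
  exact Finset.sup_le fun k hk => (mem_Icc.1 (mem_filter.1 hk).1).2

theorem le_bhCount {k : ℕ} (hk : k ∈ Icc 1 G) (h : orderStat (Icc 1 G) p k ≤ k * q / G) :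
    k ≤ bhCount G q p := by
  rw [bhCount_eq_sup]
  exact le_sup (f := id) (mem_filter.2 ⟨hk, h⟩)

theorem lt_orderStat_of_bhCount_lt {k : ℕ} (hk : k ∈ Icc 1 G) (hK : bhCount G q p < k) :
    k * q / G < orderStat (Icc 1 G) p k :=
  lt_of_not_ge fun h => hK.not_ge (le_bhCount hk h)

theorem bhCount_le_of_forall_lt {K : ℕ}
    (h : ∀ k ∈ Icc 1 G, K < k → k * q / G < orderStat (Icc 1 G) p k) : bhCount G q p ≤ K := by
  rw [bhCount_eq_sup]
  refine Finset.sup_le fun k hk => ?_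
  obtain ⟨hkG, hle⟩ := mem_filter.1 hk
  exact le_of_not_gt fun hK => (h k hkG hK).not_ge hle

theorem orderStat_bhCount_le (h : bhCount G q p ≠ 0) :
    orderStat (Icc 1 G) p (bhCount G q p) ≤ bhCount G q p * q / G := by
  rw [bhCount_eq_sup] at h ⊢
  rcases (bhCandidates G q p).eq_empty_or_nonempty with hempty | hne
  · simp [hempty] at h
  · obtain ⟨k, hk, hsup⟩ := exists_mem_eq_sup _ hne id
    rw [hsup]
    exact (mem_filter.1 hk).2

theorem bhCount_eq_iff {K : ℕ} (hKG : K ≤ G) :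
    bhCount G q p = K ↔ (0 < K → orderStat (Icc 1 G) p K ≤ K * q / G) ∧
      ∀ k ∈ Icc 1 G, K < k → k * q / G < orderStat (Icc 1 G) p k := by
  constructor
  · rintro rfl
    exact ⟨fun h => orderStat_bhCount_le h.ne', fun k hk => lt_orderStat_of_bhCount_lt hk⟩
  · rintro ⟨hle, hlt⟩
    refine le_antisymm (bhCount_le_of_forall_lt hlt) ?_
    rcases K.eq_zero_or_pos with rfl | hK
    · exact Nat.zero_le _
    · exact le_bhCount (mem_Icc.2 ⟨hK, hKG⟩) (hle hK)

theorem bhRejectionSet_eq_filter_rankIn :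
    bhRejectionSet G q p = {g ∈ Icc 1 G | rankIn (Icc 1 G) p g ≤ bhCount G q p} :=
  rfl

theorem card_bhRejectionSet (hp : Set.InjOn p (Icc 1 G)) :
    #(bhRejectionSet G q p) = bhCount G q p := by
  rw [bhRejectionSet_eq_filter_rankIn, card_filter_rankIn_le hp, Nat.card_Icc,
    add_tsub_cancel_right, min_eq_left bhCount_le]

theorem bhRejectionSet_eq_iff (hp : Set.InjOn p (Icc 1 G)) (h𝒢 : 𝒢 ⊆ Icc 1 G) :
    bhRejectionSet G q p = 𝒢 ↔
      bhCount G q p = #𝒢 ∧ ∀ g ∈ 𝒢, ∀ g' ∈ Icc 1 G \ 𝒢, p g < p g' := by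
  constructor
  · rintro rfl
    exact ⟨(card_bhRejectionSet hp).symm, fun g hg g' hg' => lt_of_mem_filter_rankIn_le hg hg'⟩
  · rintro ⟨hK, hsep⟩
    rw [bhRejectionSet_eq_filter_rankIn, hK]
    exact filter_rankIn_le_card_eq h𝒢 hp hsep

theorem bhCount_eq_card_iff (hp : Set.InjOn p (Icc 1 G)) (h𝒢 : 𝒢 ⊆ Icc 1 G)
    (hsep : ∀ g ∈ 𝒢, ∀ g' ∈ Icc 1 G \ 𝒢, p g < p g') :
    bhCount G q p = #𝒢 ↔ (∀ g ∈ 𝒢, p g ≤ #𝒢 * q / G) ∧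
      ∀ k ∈ Icc 1 (G - #𝒢), (#𝒢 + k) * q / G < orderStat (Icc 1 G \ 𝒢) p k := by
  have hinj : Set.InjOn p 𝒢 := hp.mono h𝒢
  have h𝒢G : #𝒢 ≤ G := (card_le_card h𝒢).trans_eq (by simp)
  rw [bhCount_eq_iff h𝒢G]
  refine and_congr ?_ ⟨fun h k hk => ?_, fun h k hk hlt => ?_⟩
  · rcases 𝒢.eq_empty_or_nonempty with rfl | hne
    · simp
    rw [orderStat_of_le_card h𝒢 hsep hinj hne.card_pos le_rfl, orderStat_card_eq_max' hinj hne,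
      max'_le_iff, forall_mem_image]
    exact ⟨fun h => h hne.card_pos, fun h _ => h⟩
  · obtain ⟨hk1, hkG⟩ := mem_Icc.1 hk
    rw [← orderStat_card_add h𝒢 hsep hinj hk1]
    exact_mod_cast h (#𝒢 + k) (mem_Icc.2 ⟨by omega, by omega⟩) (by omega)
  · obtain ⟨-, hkG⟩ := mem_Icc.1 hk
    obtain ⟨j, rfl⟩ := Nat.exists_eq_add_of_lt hlt
    have := h (j + 1) (mem_Icc.2 ⟨by omega, by omega⟩)
    rw [← orderStat_card_add h𝒢 hsep hinj j.succ_pos] at this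
    exact_mod_cast this

theorem separated_of_le_of_lt_orderStat (hq : 0 ≤ q) (h𝒢 : 𝒢 ⊆ Icc 1 G)
    (ha : ∀ g ∈ 𝒢, p g ≤ #𝒢 * q / G)
    (hb : ∀ k ∈ Icc 1 (G - #𝒢), (#𝒢 + k) * q / G < orderStat (Icc 1 G \ 𝒢) p k) :
    ∀ g ∈ 𝒢, ∀ g' ∈ Icc 1 G \ 𝒢, p g < p g' := fun g hg g' hg' => by
  have h1 : 1 ∈ Icc 1 (G - #𝒢) := by
    have hO : #(Icc 1 G \ 𝒢) = G - #𝒢 := by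
      rw [card_sdiff_of_subset h𝒢, Nat.card_Icc, add_tsub_cancel_right]
    exact mem_Icc.2 ⟨le_rfl, hO ▸ card_pos.2 ⟨g', hg'⟩⟩
  calc p g ≤ #𝒢 * q / G := ha g hg
    _ ≤ (#𝒢 + 1) * q / G := by gcongr; linarith
    _ < orderStat (Icc 1 G \ 𝒢) p 1 := by exact_mod_cast hb 1 h1
    _ ≤ p g' := orderStat_one_le hg'

end BenjaminiHochberg

theorem bh_rejection_set_separability_general
    (G : ℕ) (q : ℝ) (hq : 0 < q) (p : ℕ → ℝ) (hdistinct : Set.InjOn p (Finset.Icc 1 G : Set ℕ))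
    (K₀ : ℕ) (𝒢 : Finset ℕ) (h𝒢 : 𝒢 ⊆ Finset.Icc 1 G)
    (hcard : 𝒢.card = K₀) :
    bhRejectionSet G q p = 𝒢 ↔
      ((∀ g ∈ 𝒢, p g ≤ (K₀ : ℝ) * q / G) ∧
        ∀ k ∈ Finset.Icc 1 (G - K₀),
          orderStat (Finset.Icc 1 G \ 𝒢) p k > ((K₀ : ℝ) + k) * q / G) := by
  subst hcard
  rw [bhRejectionSet_eq_iff hdistinct h𝒢]
  constructor
  · rintro ⟨hK, hsep⟩
    exact (bhCount_eq_card_iff hdistinct h𝒢 hsep).1 hK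
  · rintro ⟨ha, hb⟩
    have hsep := separated_of_le_of_lt_orderStat hq.le h𝒢 ha hb
    exact ⟨(bhCount_eq_card_iff hdistinct h𝒢 hsep).2 ⟨ha, hb⟩, hsep⟩

/-- Separability of the BH selection event: for pairwise distinct p-values, the BH rejection
set equals a given set `𝒢` of cardinality `K₀ ≥ 1` if and only if (a) every p-value in `𝒢` is
at most `K₀·q/G`, and (b) for every `k ∈ {1,…,G−K₀}` the `k`-th smallest p-value outside `𝒢`
is strictly greater than `(K₀+k)·q/G`. -/
theorem bh_rejection_set_separability
    (G : ℕ) (hG : 1 ≤ G) (q : ℝ) (hq : 0 < q) (hq1 : q < 1)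
    (p : ℕ → ℝ) (hp01 : ∀ g ∈ Finset.Icc 1 G, p g ∈ Set.Icc (0 : ℝ) 1)
    (hdistinct : Set.InjOn p (Finset.Icc 1 G : Set ℕ))
    (K₀ : ℕ) (hK₀ : 1 ≤ K₀) (𝒢 : Finset ℕ) (h𝒢 : 𝒢 ⊆ Finset.Icc 1 G)
    (hcard : 𝒢.card = K₀) :
    bhRejectionSet G q p = 𝒢 ↔
      ((∀ g ∈ 𝒢, p g ≤ (K₀ : ℝ) * q / G) ∧
        ∀ k ∈ Finset.Icc 1 (G - K₀),
          orderStat (Finset.Icc 1 G \ 𝒢) p k > ((K₀ : ℝ) + k) * q / G) :=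
  bh_rejection_set_separability_general G q hq p hdistinct K₀ 𝒢 h𝒢 hcard
end

section
/- Let σ > 0 and let ν be a probability measure on ℝ^d. Let H ⊆ ℝ × ℝ^d be measurable, and set 𝒫(t) = ν({w : (t,w) ∈ H}) for t ∈ ℝ and h(t) = exp(−t²/(2σ²))·𝒫(t). Assume that for a given b ∈ ℝ the normalizer Z(b) = ∫_ℝ exp(b·t/σ²)·h(t) dt satisfies 0 < Z(b) < ∞. Then, for B a real Gaussian N(b, σ²) random variable and W an independent ℝ^d-valued random vector with law ν such that P((B,W) ∈ H) > 0, the conditional law of B given {(B,W) ∈ H} has Lebesgue density t ↦ h(t)·exp(b·t/σ²) / Z(b); in particular, as b varies over the set where 0 < Z(b) < ∞, these conditional laws form a one-parameter exponential family with sufficient statistic t and natural parameter b/σ². -/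
open MeasureTheory ProbabilityTheory

/-! By independence the joint law of `(B, W)` is `N(b, σ²) ⊗ ν`, so on the selection event the
law of `B` has density `φ(t) 𝒫(t)` with `φ` the Gaussian density. Expanding the square,
`φ(t) = φ(0) · exp(bt/σ²) · exp(-t²/(2σ²))`, so this density is the constant `φ(0)` times
`exp(bt/σ²) h(t)`, and conditioning, i.e. normalising to total mass one, turns it into
`exp(bt/σ²) h(t) / Z`. -/

theorem gaussianPDFReal_eq_mul_exp (μ : ℝ) (v : NNReal) (x : ℝ) :
    gaussianPDFReal μ v x =
      gaussianPDFReal μ v 0 * Real.exp (μ * x / v) * Real.exp (-x ^ 2 / (2 * v)) := by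
  simp only [gaussianPDFReal_def, mul_assoc, ← Real.exp_add]
  rcases eq_or_ne v 0 with rfl | hv
  · simp -- both sides vanish, as `(√0)⁻¹ = 0`
  · congr 2
    field_simp
    ring

namespace MeasureTheory.Measure

variable {α β : Type*} [MeasurableSpace α] [MeasurableSpace β]

theorem map_fst_restrict_prod (μ : Measure α) (ν : Measure β) [SFinite ν]
    {H : Set (α × β)} (hH : MeasurableSet H) :
    ((μ.prod ν).restrict H).map Prod.fst = μ.withDensity fun x => ν (Prod.mk x ⁻¹' H) := by
  ext s hs
  have hsection : ∀ x, ν (Prod.mk x ⁻¹' (Prod.fst ⁻¹' s ∩ H)) =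
      s.indicator (fun x => ν (Prod.mk x ⁻¹' H)) x := by
    intro x
    by_cases hx : x ∈ s <;> simp [Set.preimage_preimage, hx]
  rw [map_apply measurable_fst hs, restrict_apply (measurable_fst hs),
    prod_apply ((measurable_fst hs).inter hH), withDensity_apply _ hs, ← lintegral_indicator hs]
  simp only [hsection]

end MeasureTheory.Measure

namespace ProbabilityTheory

variable {Ω α β : Type*} [MeasurableSpace Ω] [MeasurableSpace α] [MeasurableSpace β]
  {P : Measure Ω}

theorem IndepFun.map_restrict_mem_eq_withDensity [IsFiniteMeasure P] {X : Ω → α} {Y : Ω → β}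
    (hX : Measurable X) (hY : Measurable Y) (hXY : IndepFun X Y P)
    {H : Set (α × β)} (hH : MeasurableSet H) :
    (P.restrict {ω | (X ω, Y ω) ∈ H}).map X =
      (P.map X).withDensity fun x => P.map Y (Prod.mk x ⁻¹' H) := by
  have hpair : Measurable fun ω => (X ω, Y ω) := hX.prodMk hY
  rw [← Measure.map_fst_restrict_prod _ _ hH,
    ← (indepFun_iff_map_prod_eq_prod_map_map hX.aemeasurable hY.aemeasurable).mp hXY,
    Measure.restrict_map hpair hH, Measure.map_map measurable_fst hpair]
  rfl

theorem map_cond_eq_withDensity_div_integral {X : Ω → α} (hX : Measurable X) {E : Set Ω}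
    {μ : Measure α} {f : α → ℝ} (hf_nonneg : 0 ≤ f) (hf_int : Integrable f μ)
    (hf_pos : 0 < ∫ x, f x ∂μ) {c : ℝ} (hc : 0 < c)
    (hE : (P.restrict E).map X = μ.withDensity fun x => ENNReal.ofReal (c * f x)) :
    P[|E].map X = μ.withDensity fun x => ENNReal.ofReal (f x / ∫ x, f x ∂μ) := by
  have hmass_pos : 0 < c * ∫ x, f x ∂μ := mul_pos hc hf_pos
  have hmass : P E = ENNReal.ofReal (c * ∫ x, f x ∂μ) := by
    rw [← Measure.restrict_apply_univ, ← Set.preimage_univ (f := X),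
      ← Measure.map_apply hX MeasurableSet.univ, hE, withDensity_apply _ MeasurableSet.univ,
      Measure.restrict_univ, ← integral_const_mul,
      ofReal_integral_eq_lintegral_ofReal (hf_int.const_mul c)
        (Filter.Eventually.of_forall fun x => mul_nonneg hc.le (hf_nonneg x))]
  rw [cond, Measure.map_smul, hE, hmass, ← withDensity_smul' _ _
    (ENNReal.inv_ne_top.mpr (ENNReal.ofReal_pos.mpr hmass_pos).ne')]
  congr 1
  funext x
  rw [Pi.smul_apply, smul_eq_mul, ← ENNReal.ofReal_inv_of_pos hmass_pos,
    ← ENNReal.ofReal_mul (inv_nonneg.mpr hmass_pos.le)]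
  congr 1
  field_simp

end ProbabilityTheory

theorem selection_adjusted_law_exponential_family_general
    {Ω : Type*} [MeasurableSpace Ω] (P : Measure Ω) [IsProbabilityMeasure P]
    (b σ : ℝ) (hσ : 0 < σ) (d : ℕ)
    (ν : Measure (Fin d → ℝ)) [IsProbabilityMeasure ν]
    (H : Set (ℝ × (Fin d → ℝ))) (hH : MeasurableSet H)
    (Psel : ℝ → ℝ) (hPsel : ∀ t, Psel t = (ν {w | (t, w) ∈ H}).toReal)
    (h : ℝ → ℝ) (hh : ∀ t, h t = Real.exp (-t ^ 2 / (2 * σ ^ 2)) * Psel t)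
    (Z : ℝ) (hZ : Z = ∫ t, Real.exp (b * t / σ ^ 2) * h t)
    (hZint : Integrable (fun t => Real.exp (b * t / σ ^ 2) * h t))
    (hZpos : 0 < Z)
    (B : Ω → ℝ) (hBmeas : Measurable B)
    (hBlaw : Measure.map B P = gaussianReal b ((σ ^ 2).toNNReal))
    (W : Ω → (Fin d → ℝ)) (hWmeas : Measurable W)
    (hWlaw : Measure.map W P = ν)
    (hindep : IndepFun B W P) :
    Measure.map B (P[|{ω | (B ω, W ω) ∈ H}]) =
      volume.withDensity
        (fun t => ENNReal.ofReal (h t * Real.exp (b * t / σ ^ 2) / Z)) := by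
  have hσ2 : 0 < σ ^ 2 := by positivity
  set v := (σ ^ 2).toNNReal
  have hv : (v : ℝ) = σ ^ 2 := Real.coe_toNNReal _ hσ2.le
  have hv0 : v ≠ 0 := Real.toNNReal_pos.mpr hσ2 |>.ne'
  set f : ℝ → ℝ := fun t => Real.exp (b * t / σ ^ 2) * h t
  have hf_nonneg : 0 ≤ f := fun t => by
    have : 0 ≤ Psel t := hPsel t ▸ ENNReal.toReal_nonneg
    simp only [f, hh]
    positivity
  have hdensity (t : ℝ) : gaussianPDF b v t * ν (Prod.mk t ⁻¹' H) =
      ENNReal.ofReal (gaussianPDFReal b v 0 * f t) := by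
    rw [gaussianPDF, ← ENNReal.ofReal_toReal (measure_ne_top ν _),
      ← ENNReal.ofReal_mul (gaussianPDFReal_nonneg b v t), gaussianPDFReal_eq_mul_exp]
    simp only [f, hh, hPsel, hv, Set.preimage]
    congr 1
    ring
  have hrestrict : (P.restrict {ω | (B ω, W ω) ∈ H}).map B =
      volume.withDensity fun t => ENNReal.ofReal (gaussianPDFReal b v 0 * f t) := by
    rw [hindep.map_restrict_mem_eq_withDensity hBmeas hWmeas hH, hBlaw, hWlaw,
      gaussianReal_of_var_ne_zero b hv0,
      ← withDensity_mul _ (measurable_gaussianPDF b v) (measurable_measure_prodMk_left hH)]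
    exact congrArg _ (funext hdensity)
  rw [map_cond_eq_withDensity_div_integral hBmeas hf_nonneg hZint (hZ ▸ hZpos)
    (gaussianPDFReal_pos b v 0 hv0) hrestrict, ← hZ]
  simp only [f, mul_comm]

/-- The marginal selection-adjusted law of the target statistic is an exponential family:
if `B ~ N(b, σ²)` and `W ~ ν` are independent, `Psel(t) = ν{w : (t,w) ∈ H}`,
`h(t) = exp(−t²/(2σ²))·Psel(t)` and `0 < Z(b) = ∫ exp(bt/σ²)h(t)dt < ∞`, then the conditional
law of `B` given the selection event `{(B,W) ∈ H}` has Lebesgue density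
`t ↦ h(t)·exp(bt/σ²)/Z(b)`, an exponential family with natural parameter `b/σ²`. -/
theorem selection_adjusted_law_exponential_family
    {Ω : Type*} [MeasurableSpace Ω] (P : Measure Ω) [IsProbabilityMeasure P]
    (b σ : ℝ) (hσ : 0 < σ) (d : ℕ)
    (ν : Measure (Fin d → ℝ)) [IsProbabilityMeasure ν]
    (H : Set (ℝ × (Fin d → ℝ))) (hH : MeasurableSet H)
    (Psel : ℝ → ℝ) (hPsel : ∀ t, Psel t = (ν {w | (t, w) ∈ H}).toReal)
    (h : ℝ → ℝ) (hh : ∀ t, h t = Real.exp (-t ^ 2 / (2 * σ ^ 2)) * Psel t)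
    (Z : ℝ) (hZ : Z = ∫ t, Real.exp (b * t / σ ^ 2) * h t)
    (hZint : Integrable (fun t => Real.exp (b * t / σ ^ 2) * h t))
    (hZpos : 0 < Z)
    (B : Ω → ℝ) (hBmeas : Measurable B)
    (hBlaw : Measure.map B P = gaussianReal b ((σ ^ 2).toNNReal))
    (W : Ω → (Fin d → ℝ)) (hWmeas : Measurable W)
    (hWlaw : Measure.map W P = ν)
    (hindep : IndepFun B W P)
    (hEpos : 0 < P {ω | (B ω, W ω) ∈ H}) :
    Measure.map B (P[|{ω | (B ω, W ω) ∈ H}]) =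
      volume.withDensity
        (fun t => ENNReal.ofReal (h t * Real.exp (b * t / σ ^ 2) / Z)) :=
  selection_adjusted_law_exponential_family_general P b σ hσ d ν H hH Psel hPsel h hh Z hZ hZint
    hZpos B hBmeas hBlaw W hWmeas hWlaw hindep
end

section
/- Let b ∈ ℝ and σ, γ, τ > 0. Let B be a real Gaussian N(b, σ²) random variable, W a real Gaussian N(0, γ²) random variable, and Z an ℝ^p-valued random vector with law N(0, τ²I_p), with B, W, Z mutually independent. Fix P, q₀ ∈ ℝ, s ∈ {−1,1}, a vector A ∈ ℝ^p, a vector c ∈ ℝ^p, and an invertible matrix M ∈ ℝ^{p×p}, and define the reparameterized variables η(t, w) = s·(w − P·t − q₀) and o(t, z) = M⁻¹(z − A·t − c). Let C₁ ⊆ ℝ and C₂ ⊆ ℝ^p be measurable sets such that the selection event {η(B, W) ∈ C₁ and o(B, Z) ∈ C₂} has positive probability. Then the conditional law of B given this event has Lebesgue density proportional to t ↦ exp(−(t−b)²/(2σ²)) · P(η(t, W) ∈ C₁) · P(o(t, Z) ∈ C₂). -/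
/-!
Conditioning on `{(B, W, Z) ∈ S}` with `B` independent of `(W, Z)` reweights the law of `B` by
`t ↦ P((W, Z) ∈ S_t) / P((B, W, Z) ∈ S)`, where `S_t` is the section of `S` at `t`: this is
Tonelli's theorem for the product law of `(B, (W, Z))`. For the selection event the section is
the product `{w | η t w ∈ C₁} × {z | o t z ∈ C₂}`, whose probability factors because `W` and `Z`
are independent, and the law of `B` has the Gaussian density.
-/

open MeasureTheory ProbabilityTheory

theorem MeasureTheory.Measure.prod_inter_preimage_fst {α β : Type*} [MeasurableSpace α]
    [MeasurableSpace β] (μ : Measure α) (ν : Measure β) [SFinite μ] [SFinite ν]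
    {S : Set (α × β)} (hS : MeasurableSet S) (U : Set α) :
    (μ.prod ν) (S ∩ Prod.fst ⁻¹' U) = ∫⁻ t in U, ν (Prod.mk t ⁻¹' S) ∂μ := by
  rw [← Set.prod_univ, ← Measure.restrict_apply hS, ← Measure.restrict_prod_eq_prod_univ,
    Measure.prod_apply hS]

section ConditionalLaw

variable {Ω α β : Type*} [MeasurableSpace Ω] [MeasurableSpace α] [MeasurableSpace β]
  {P : Measure Ω} {X : Ω → β} {S : Set (α × β)}

theorem measure_preimage_prodMk_left_eq_map (hX : Measurable X) (hS : MeasurableSet S) (t : α) :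
    P (X ⁻¹' (Prod.mk t ⁻¹' S)) = P.map X (Prod.mk t ⁻¹' S) :=
  (Measure.map_apply hX (measurable_prodMk_left hS)).symm

theorem measurable_measure_preimage_prodMk_left [IsFiniteMeasure P] (hX : Measurable X)
    (hS : MeasurableSet S) : Measurable fun t => P (X ⁻¹' (Prod.mk t ⁻¹' S)) := by
  simp_rw [measure_preimage_prodMk_left_eq_map hX hS]
  exact measurable_measure_prodMk_left hS

theorem map_cond_preimage_eq_withDensity [IsFiniteMeasure P] {B : Ω → α}
    (hB : Measurable B) (hX : Measurable X) (hBX : IndepFun B X P) (hS : MeasurableSet S) :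
    (P[|(fun ω => (B ω, X ω)) ⁻¹' S]).map B =
      (P.map B).withDensity fun t =>
        (P ((fun ω => (B ω, X ω)) ⁻¹' S))⁻¹ * P (X ⁻¹' (Prod.mk t ⁻¹' S)) := by
  have hBX' : Measurable fun ω => (B ω, X ω) := hB.prodMk hX
  ext U hU
  rw [Measure.map_apply hB hU, cond_apply (hBX' hS), withDensity_apply _ hU,
    lintegral_const_mul _ (measurable_measure_preimage_prodMk_left hX hS)]
  congr 1
  change P ((fun ω => (B ω, X ω)) ⁻¹' (S ∩ Prod.fst ⁻¹' U)) = _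
  simp_rw [measure_preimage_prodMk_left_eq_map hX hS]
  rw [← Measure.map_apply hBX' (hS.inter (measurable_fst hU)),
    hBX.map_prod_eq_prod_map_map hB.aemeasurable hX.aemeasurable,
    Measure.prod_inter_preimage_fst _ _ hS]

end ConditionalLaw

theorem gaussianPDF_mul_eq_ofReal (b σ t : ℝ) (hσ : 0 < σ) {a u v : ENNReal} (ha₀ : a ≠ 0)
    (ha : a ≠ ⊤) (hu : u ≠ ⊤) (hv : v ≠ ⊤) :
    gaussianPDF b (σ ^ 2).toNNReal t * (a⁻¹ * (u * v)) =
      ENNReal.ofReal ((a.toReal⁻¹ * (√(2 * Real.pi * σ ^ 2))⁻¹) *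
        (Real.exp (-(t - b) ^ 2 / (2 * σ ^ 2)) * u.toReal * v.toReal)) := by
  have hσ2 : ((σ ^ 2).toNNReal : ℝ) = σ ^ 2 := Real.coe_toNNReal _ (by positivity)
  rw [gaussianPDF, gaussianPDFReal, hσ2, ENNReal.ofReal_mul (by positivity),
    ENNReal.ofReal_mul (by positivity), ENNReal.ofReal_mul (by positivity),
    ENNReal.ofReal_mul (by positivity), ENNReal.ofReal_mul (by positivity),
    ENNReal.ofReal_toReal hu, ENNReal.ofReal_toReal hv,
    ENNReal.ofReal_inv_of_pos (ENNReal.toReal_pos ha₀ ha), ENNReal.ofReal_toReal ha]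
  ring

theorem change_of_variables_selection_adjusted_law_general
    {Ω : Type*} [MeasurableSpace Ω] (P : Measure Ω) [IsProbabilityMeasure P]
    (b σ : ℝ) (hσ : 0 < σ) (p : ℕ)
    (B : Ω → ℝ) (hBmeas : Measurable B)
    (hBlaw : Measure.map B P = gaussianReal b ((σ ^ 2).toNNReal))
    (W : Ω → ℝ) (hWmeas : Measurable W)
    (Z : Ω → (Fin p → ℝ)) (hZmeas : Measurable Z)
    (hindepB : IndepFun B (fun ω => (W ω, Z ω)) P)
    (hindepWZ : IndepFun W Z P)
    (Pc q₀ : ℝ) (s : ℝ)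
    (A c : Fin p → ℝ) (M : Matrix (Fin p) (Fin p) ℝ)
    (η : ℝ → ℝ → ℝ) (hη : η = fun t w => s * (w - Pc * t - q₀))
    (o : ℝ → (Fin p → ℝ) → (Fin p → ℝ))
    (ho : o = fun t z => M⁻¹.mulVec (z - (fun i => t * A i) - c))
    (C₁ : Set ℝ) (hC₁ : MeasurableSet C₁)
    (C₂ : Set (Fin p → ℝ)) (hC₂ : MeasurableSet C₂)
    (E : Set Ω) (hE : E = {ω | η (B ω) (W ω) ∈ C₁ ∧ o (B ω) (Z ω) ∈ C₂})
    (hEpos : 0 < P E) :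
    ∃ kc : ℝ, 0 < kc ∧
      Measure.map B (P[|E]) =
        volume.withDensity (fun t => ENNReal.ofReal
          (kc * (Real.exp (-(t - b) ^ 2 / (2 * σ ^ 2)) *
            (P {ω | η t (W ω) ∈ C₁}).toReal * (P {ω | o t (Z ω) ∈ C₂}).toReal))) := by
  have hη_meas : Measurable fun q : ℝ × ℝ => η q.1 q.2 := by rw [hη]; fun_prop
  have ho_meas : Measurable fun q : ℝ × (Fin p → ℝ) => o q.1 q.2 := by
    rw [ho]
    exact (M⁻¹.mulVecLin.continuous_of_finiteDimensional).measurable.comp (by fun_prop)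
  set S : Set (ℝ × ℝ × (Fin p → ℝ)) := {q | η q.1 q.2.1 ∈ C₁ ∧ o q.1 q.2.2 ∈ C₂}
  have hS : MeasurableSet S :=
    (hη_meas.comp (measurable_fst.prodMk measurable_snd.fst) hC₁).inter
      (ho_meas.comp (measurable_fst.prodMk measurable_snd.snd) hC₂)
  have hsection (t : ℝ) : P ((fun ω => (W ω, Z ω)) ⁻¹' (Prod.mk t ⁻¹' S)) =
      P {ω | η t (W ω) ∈ C₁} * P {ω | o t (Z ω) ∈ C₂} :=
    hindepWZ.measure_inter_preimage_eq_mul _ _ (hη_meas.comp measurable_prodMk_left hC₁)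
      (ho_meas.comp measurable_prodMk_left hC₂)
  have hE' : E = (fun ω => (B ω, (W ω, Z ω))) ⁻¹' S := hE
  have hvar : (σ ^ 2).toNNReal ≠ 0 := by simpa using hσ.ne'
  refine ⟨(P E).toReal⁻¹ * (√(2 * Real.pi * σ ^ 2))⁻¹,
    mul_pos (inv_pos.2 (ENNReal.toReal_pos hEpos.ne' (measure_ne_top P E))) (by positivity), ?_⟩
  rw [hE', map_cond_preimage_eq_withDensity hBmeas (hWmeas.prodMk hZmeas) hindepB hS, hBlaw,
    gaussianReal_of_var_ne_zero _ hvar, ← withDensity_mul _ (measurable_gaussianPDF _ _)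
      ((measurable_measure_preimage_prodMk_left (hWmeas.prodMk hZmeas) hS).const_mul _)]
  congr with t
  rw [← hE', Pi.mul_apply, hsection]
  exact gaussianPDF_mul_eq_ofReal b σ t hσ hEpos.ne' (measure_ne_top P E) (measure_ne_top _ _)
    (measure_ne_top _ _)

/-- Change-of-variables lemma for the selection-adjusted law: after reparameterizing the
eGene-screening randomization `W` and the LASSO randomization `Z` through the affine KKT
maps `η(t,w) = s(w − Pt − q₀)` and `o(t,z) = M⁻¹(z − At − c)`, the conditional law of the
target statistic `B ~ N(b,σ²)` given the selection event
`{η(B,W) ∈ C₁, o(B,Z) ∈ C₂}` has Lebesgue density proportional to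
`t ↦ exp(−(t−b)²/(2σ²))·P(η(t,W) ∈ C₁)·P(o(t,Z) ∈ C₂)`. -/
theorem change_of_variables_selection_adjusted_law
    {Ω : Type*} [MeasurableSpace Ω] (P : Measure Ω) [IsProbabilityMeasure P]
    (b σ γ τ : ℝ) (hσ : 0 < σ) (hγ : 0 < γ) (hτ : 0 < τ) (p : ℕ) (hp : 1 ≤ p)
    (B : Ω → ℝ) (hBmeas : Measurable B)
    (hBlaw : Measure.map B P = gaussianReal b ((σ ^ 2).toNNReal))
    (W : Ω → ℝ) (hWmeas : Measurable W)
    (hWlaw : Measure.map W P = gaussianReal 0 ((γ ^ 2).toNNReal))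
    (Z : Ω → (Fin p → ℝ)) (hZmeas : Measurable Z)
    (hZlaw : Measure.map Z P = Measure.pi (fun _ => gaussianReal 0 ((τ ^ 2).toNNReal)))
    (hindepB : IndepFun B (fun ω => (W ω, Z ω)) P)
    (hindepWZ : IndepFun W Z P)
    (Pc q₀ : ℝ) (s : ℝ) (hs : s = -1 ∨ s = 1)
    (A c : Fin p → ℝ) (M : Matrix (Fin p) (Fin p) ℝ) (hM : IsUnit M.det)
    (η : ℝ → ℝ → ℝ) (hη : η = fun t w => s * (w - Pc * t - q₀))
    (o : ℝ → (Fin p → ℝ) → (Fin p → ℝ))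
    (ho : o = fun t z => M⁻¹.mulVec (z - (fun i => t * A i) - c))
    (C₁ : Set ℝ) (hC₁ : MeasurableSet C₁)
    (C₂ : Set (Fin p → ℝ)) (hC₂ : MeasurableSet C₂)
    (E : Set Ω) (hE : E = {ω | η (B ω) (W ω) ∈ C₁ ∧ o (B ω) (Z ω) ∈ C₂})
    (hEpos : 0 < P E) :
    ∃ kc : ℝ, 0 < kc ∧
      Measure.map B (P[|E]) =
        volume.withDensity (fun t => ENNReal.ofReal
          (kc * (Real.exp (-(t - b) ^ 2 / (2 * σ ^ 2)) *
            (P {ω | η t (W ω) ∈ C₁}).toReal * (P {ω | o t (Z ω) ∈ C₂}).toReal))) :=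
  change_of_variables_selection_adjusted_law_general P b σ hσ p B hBmeas hBlaw W hWmeas Z hZmeas
    hindepB hindepWZ Pc q₀ s A c M η hη o ho C₁ hC₁ C₂ hC₂ E hE hEpos
end
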